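/- Combinatorial form of Corollary 6 (M(C, C') = M(C', C)^{-1}): let G be a simple graph on a finite vertex set V and v₁, …, v_k a finite sequence of vertices. Define G₀ = G, G_i = (G_{i-1})^{v_i}; let φ̄ be the constant transition function with value φ, and define s₀ = φ̄, s_i = (s_{i-1})^{G_{i-1}, v_i} for 1 ≤ i ≤ k. Now apply the reversed sequence starting from G_k: define H₀ = G_k, u₀ = φ̄, and H_j = (H_{j-1})^{v_{k+1-j}}, u_j = (u_{j-1})^{H_{j-1}, v_{k+1-j}} for 1 ≤ j ≤ k. Then H_k = G and M(H_k, u_k) · M(G_k, s_k) = I = M(G_k, s_k) · M(H_k, u_k); that is, M(H_k, u_k) = M(G_k, s_k)^{-1}. -/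

import Mathlib

open scoped Classical

/-- The three transitions at a vertex, labeled relative to an Euler system. -/
inductive Transition : Type
  | phi | chi | psi
  deriving DecidableEq

variable {V : Type*} [Fintype V] [DecidableEq V]

/-- Simple local complement `G^v`: toggle adjacency between distinct neighbors of `v`. -/
def localComp (G : SimpleGraph V) (v : V) : SimpleGraph V where
  Adj u w := u ≠ w ∧ Xor' (G.Adj u w) (G.Adj v u ∧ G.Adj v w)
  symm := by
    constructor
    rintro u w ⟨hne, hx⟩
    refine ⟨hne.symm, ?_⟩
    rw [G.adj_comm w u, and_comm]
    exact hx
  loopless := by constructor; rintro u ⟨hne, _⟩; exact hne rfl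

/-- Modified interlacement matrix `M(G, t)` over GF(2). -/
noncomputable def Mmat (G : SimpleGraph V) (t : V → Transition) : Matrix V V (ZMod 2) :=
  Matrix.of fun w u =>
    if w = u then (if t u = Transition.chi then 0 else 1)
    else if t u = Transition.phi then 0
    else if G.Adj w u then 1 else 0

/-- Updated transition function `t^{G,v}`. -/
noncomputable def updT (G : SimpleGraph V) (v : V) (t : V → Transition) : V → Transition :=
  fun u =>
    if u = v then
      match t u with
      | Transition.phi => Transition.psi
      | Transition.psi => Transition.phi
      | Transition.chi => Transition.chi
    else if G.Adj v u then
      match t u with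
      | Transition.chi => Transition.psi
      | Transition.psi => Transition.chi
      | Transition.phi => Transition.phi
    else t u

/-- Modified local complement of a matrix, taken with respect to `G` at `v`:
add row `v` to the row of every neighbor of `v` in `G`. -/
noncomputable def modLC (G : SimpleGraph V) (v : V) (M : Matrix V V (ZMod 2)) :
    Matrix V V (ZMod 2) :=
  Matrix.of fun w u => if G.Adj v w then M w u + M v u else M w u

/-- One κ-step at `v` applied to a graph together with a transition function:
`(G, s) ↦ (G^v, s^{G,v})`. -/
noncomputable def stepGT (v : V) (p : SimpleGraph V × (V → Transition)) :
    SimpleGraph V × (V → Transition) :=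
  (localComp p.1 v, updT p.1 v p.2)

/-!
Write `E_v(G)` for the elementary matrix over GF(2) that adds row `v` to the rows of the
neighbours of `v` in `G`, so that `modLC G v M = E_v(G) · M`. A direct entrywise check gives
`M(G^v, t^{G,v}) = E_v(G) · M(G, t)`, so `M(G_k, s_k) = E_{v_k}(G_{k-1}) ⋯ E_{v_1}(G_0)` since
`M(G, φ̄) = 1`. Local complementation at `v` does not change the neighbourhood of `v` and is an
involution, so `E_v(G^v) = E_v(G)`, each `E_v(G)` is an involution, and running the reversed
sequence from `G_k` revisits the graphs `G_{k-1}, …, G_0` and multiplies by the same elementary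
matrices in the opposite order, which undoes the first run.
-/

theorem List.foldl_reverse_foldl_of_involutive {α β : Type*} (f : α → β → β)
    (hf : ∀ a, Function.Involutive (f a)) (l : List α) (b : β) :
    l.reverse.foldl (fun x a => f a x) (l.foldl (fun x a => f a x) b) = b := by
  induction l generalizing b with
  | nil => rfl
  | cons a l ih =>
    simp only [List.reverse_cons, List.foldl_append, List.foldl_cons, ih, List.foldl_nil]
    exact hf a b

section

variable {V : Type*}

lemma localComp_adj (G : SimpleGraph V) (v u w : V) :
    (localComp G v).Adj u w ↔ u ≠ w ∧ Xor (G.Adj u w) (G.Adj v u ∧ G.Adj v w) :=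
  Iff.rfl

lemma localComp_adj_self (G : SimpleGraph V) (v w : V) :
    (localComp G v).Adj v w ↔ G.Adj v w := by
  have : G.Adj v w → v ≠ w := G.ne_of_adj
  simp only [localComp_adj, Xor, G.loopless.irrefl, false_and]
  tauto

lemma localComp_localComp (G : SimpleGraph V) (v : V) :
    localComp (localComp G v) v = G := by
  ext u w
  have : G.Adj u w → u ≠ w := G.ne_of_adj
  rw [localComp_adj, localComp_adj_self, localComp_adj_self, localComp_adj]
  simp only [Xor]
  tauto

lemma modLC_localComp (G : SimpleGraph V) (v : V) : modLC (localComp G v) v = modLC G v := by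
  ext M w u
  simp only [modLC, localComp_adj_self]

lemma modLC_modLC (G : SimpleGraph V) (v : V) (M : Matrix V V (ZMod 2)) :
    modLC G v (modLC G v M) = M := by
  ext w u
  by_cases h : G.Adj v w <;> simp [modLC, h, add_assoc, CharTwo.add_self_eq_zero]

lemma modLC_mul [Fintype V] (G : SimpleGraph V) (v : V) (M N : Matrix V V (ZMod 2)) :
    modLC G v (M * N) = modLC G v M * N := by
  ext w u
  by_cases h : G.Adj v w <;> simp [modLC, h, Matrix.mul_apply, ← Finset.sum_add_distrib, add_mul]

/-- The step `(G, M) ↦ (G^v, E_v(G) · M)`; by `Mmat_localComp_updT` it is what `stepGT` does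
to `(G, M(G, t))`. -/
noncomputable def stepGM (v : V) (p : SimpleGraph V × Matrix V V (ZMod 2)) :
    SimpleGraph V × Matrix V V (ZMod 2) :=
  (localComp p.1 v, modLC p.1 v p.2)

lemma stepGM_involutive (v : V) : Function.Involutive (stepGM v) := by
  rintro ⟨G, M⟩
  simp only [stepGM, modLC_localComp, localComp_localComp, modLC_modLC]

lemma foldl_stepGM_mul [Fintype V] (vs : List V) (G : SimpleGraph V)
    (M N : Matrix V V (ZMod 2)) :
    vs.foldl (fun p v => stepGM v p) (G, M * N) =
      Prod.map id (· * N) (vs.foldl (fun p v => stepGM v p) (G, M)) :=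
  List.foldl_hom (Prod.map id (· * N)) (init := (G, M)) (g₁ := fun p v => stepGM v p)
    fun p v => by simp only [stepGM, Prod.map, id, modLC_mul]

variable [DecidableEq V]

lemma Mmat_phi (G : SimpleGraph V) : Mmat G (fun _ => Transition.phi) = 1 := by
  ext w u
  by_cases h : w = u <;> simp [Mmat, Matrix.one_apply, h]

-- Column `u` of either side only involves `t u` and the adjacencies among `u`, `v`, `w`.
lemma Mmat_localComp_updT (G : SimpleGraph V) (v : V) (t : V → Transition) :
    Mmat (localComp G v) (updT G v t) = modLC G v (Mmat G t) := by
  ext w u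
  have hvu : G.Adj v u → v ≠ u := G.ne_of_adj
  have hvw : G.Adj v w → v ≠ w := G.ne_of_adj
  have hwv : G.Adj w v ↔ G.Adj v w := G.adj_comm w v
  rcases eq_or_ne u v with rfl | huv
  · rcases htu : t u with _ | _ | _ <;>
      simp only [Mmat, modLC, updT, Matrix.of_apply, localComp_adj, htu] <;>
      by_cases hwu : w = u <;> by_cases huw : G.Adj u w <;>
      simp_all [Xor, CharTwo.add_self_eq_zero]
  · rcases htu : t u with _ | _ | _ <;>
      simp only [Mmat, modLC, updT, Matrix.of_apply, localComp_adj, htu, huv, huv.symm] <;>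
      by_cases hwu : w = u <;> by_cases hvu : G.Adj v u <;> by_cases hvw : G.Adj v w <;>
      by_cases hwa : G.Adj w u <;> simp_all [Xor, CharTwo.add_self_eq_zero]

lemma foldl_stepGM_Mmat (vs : List V) (G : SimpleGraph V) (t : V → Transition) :
    vs.foldl (fun p v => stepGM v p) (G, Mmat G t) =
      (fun p => (p.1, Mmat p.1 p.2)) (vs.foldl (fun p v => stepGT v p) (G, t)) :=
  List.foldl_hom (fun p : SimpleGraph V × (V → Transition) => (p.1, Mmat p.1 p.2))
    (init := (G, t)) (g₁ := fun p v => stepGT v p)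
    fun p v => by simp only [stepGM, stepGT, Mmat_localComp_updT]

end

/-- Corollary 6: run the κ-steps `v₁, …, v_k` starting from `(G, φ̄)` to get
`(G_k, s_k)`, then run the reversed sequence `v_k, …, v₁` starting from `(G_k, φ̄)` to get
`(H_k, u_k)`.  Then `H_k = G` and `M(H_k, u_k)` is the two-sided inverse of `M(G_k, s_k)`. -/
theorem Mmat_transition_inverse (G : SimpleGraph V) (vs : List V) :
    let p := vs.foldl (fun q v => stepGT v q) (G, fun _ => Transition.phi)
    let q := vs.reverse.foldl (fun q v => stepGT v q) (p.1, fun _ => Transition.phi)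
    q.1 = G ∧
    Mmat q.1 q.2 * Mmat p.1 p.2 = 1 ∧
    Mmat p.1 p.2 * Mmat q.1 q.2 = 1 := by
  intro p q
  have hp : vs.foldl (fun p v => stepGM v p) (G, 1) = (p.1, Mmat p.1 p.2) := by
    rw [← Mmat_phi G, foldl_stepGM_Mmat]
  have hq : vs.reverse.foldl (fun p v => stepGM v p) (p.1, 1) = (q.1, Mmat q.1 q.2) := by
    rw [← Mmat_phi p.1, foldl_stepGM_Mmat]
  have hqp : (q.1, Mmat q.1 q.2 * Mmat p.1 p.2) = (G, 1) := calc
    _ = vs.reverse.foldl (fun p v => stepGM v p) (p.1, 1 * Mmat p.1 p.2) := by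
      rw [foldl_stepGM_mul, hq]; rfl
    _ = vs.reverse.foldl (fun p v => stepGM v p) (vs.foldl (fun p v => stepGM v p) (G, 1)) := by
      rw [one_mul, hp]
    _ = (G, 1) := List.foldl_reverse_foldl_of_involutive stepGM stepGM_involutive vs _
  obtain ⟨hG, hM⟩ := Prod.mk.inj hqp
  exact ⟨hG, hM, mul_eq_one_comm.mp hM⟩
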